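/- If a + b > c + q + 2, then (a−1)(a+b−c−q−2)·₃F₂(1,c,q; a−1,b; 1) − (a−q−1)(a−c−1)·₃F₂(1,c,q; a,b; 1) = (a−1)(b−1). -/

import Mathlib

noncomputable def poch (a : ℝ) (n : ℕ) : ℝ := (ascPochhammer ℝ n).eval a

/-- Generalized hypergeometric series ₃F₂(a,b,c; d,e; x). -/
noncomputable def F32 (a b c d e x : ℝ) : ℝ :=
  ∑' n : ℕ, (poch a n * poch b n * poch c n) / (poch d n * poch e n * (n.factorial : ℝ)) * x ^ n

/-- `x` is not a non-positive integer. -/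
def NotNonposInt (x : ℝ) : Prop := ∀ m : ℕ, x ≠ -(m : ℝ)

/-!
Write `t_n(a) = (c)_n (q)_n / ((a)_n (b)_n)` for the terms of `₃F₂(1, c, q; a, b; 1)`.
From `(a - 1) t_n(a - 1) = (a - 1 + n) t_n(a)` and
`(a + n)(b + n) t_{n+1}(a) = (c + n)(q + n) t_n(a)`, the `n`-th term of the left-hand side is
`g_n - g_{n+1}` with `g_n = (a - 1 + n)(b - 1 + n) t_n(a)`, so its partial sums telescope to
`(a - 1)(b - 1) - g_N`. The term ratio is `1 - s/n + O(n⁻²)` with `s = a + b - c - q`; comparing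
it with `(n / (n + 1))^p` through Bernoulli's inequality gives `t_n = O(n^(-p))` for every
`1 ≤ p < s`. As `s > 2`, both series converge and `g_N → 0`.
-/

open Filter Topology Asymptotics

lemma poch_succ (x : ℝ) (n : ℕ) : poch x (n + 1) = poch x n * (x + n) := by
  simp [poch, ascPochhammer_succ_eval]

lemma poch_one (n : ℕ) : poch 1 n = n.factorial := by
  simp [poch]

lemma poch_sub_one_succ (x : ℝ) (n : ℕ) : poch (x - 1) (n + 1) = (x - 1) * poch x n := by
  simp [poch, ascPochhammer_succ_left]

lemma NotNonposInt.add_natCast_ne_zero {x : ℝ} (hx : NotNonposInt x) (n : ℕ) : x + n ≠ 0 :=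
  fun h => hx n (by linarith)

lemma NotNonposInt.of_sub_one {x : ℝ} (hx : NotNonposInt (x - 1)) : NotNonposInt x :=
  fun m h => hx (m + 1) (by push_cast; linarith)

lemma poch_ne_zero {x : ℝ} (hx : NotNonposInt x) (n : ℕ) : poch x n ≠ 0 := by
  rw [poch, Ne, ascPochhammer_eval_eq_zero_iff]
  rintro ⟨k, -, hk⟩
  exact hx k (by linarith)

noncomputable def f32Term (c q a b : ℝ) (n : ℕ) : ℝ :=
  poch c n * poch q n / (poch a n * poch b n)

lemma F32_one_eq_tsum (c q a b : ℝ) : F32 1 c q a b 1 = ∑' n, f32Term c q a b n := by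
  refine tsum_congr fun n => ?_
  have hfac : (n.factorial : ℝ) ≠ 0 := Nat.cast_ne_zero.mpr n.factorial_ne_zero
  rw [f32Term, poch_one, one_pow, mul_one, mul_comm _ (n.factorial : ℝ), mul_assoc,
    mul_div_mul_left _ _ hfac]

lemma f32Term_succ (c q a b : ℝ) (n : ℕ) :
    f32Term c q a b (n + 1) = f32Term c q a b n * ((c + n) * (q + n) / ((a + n) * (b + n))) := by
  rw [f32Term, f32Term, div_mul_div_comm]
  simp only [poch_succ]
  ring

lemma sub_one_mul_f32Term_sub_one {a : ℝ} (ha : NotNonposInt (a - 1)) (c q b : ℝ) (n : ℕ) :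
    (a - 1) * f32Term c q (a - 1) b n = (a - 1 + n) * f32Term c q a b n := by
  have hshift := (poch_succ (a - 1) n).symm.trans (poch_sub_one_succ a n)
  have h₁ := poch_ne_zero ha n
  have h₂ := poch_ne_zero ha.of_sub_one n
  by_cases hb : poch b n = 0
  · simp [f32Term, hb]
  rw [f32Term, f32Term]
  field_simp
  linear_combination -(poch c n * poch q n) * hshift

lemma f32Term_contiguous {a b : ℝ} (ha : NotNonposInt (a - 1)) (hb : NotNonposInt b) (c q : ℝ)
    (n : ℕ) :
    (a - 1) * (a + b - c - q - 2) * f32Term c q (a - 1) b n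
        - (a - q - 1) * (a - c - 1) * f32Term c q a b n
      = (a - 1 + n) * (b - 1 + n) * f32Term c q a b n
        - (a - 1 + (n + 1 : ℕ)) * (b - 1 + (n + 1 : ℕ)) * f32Term c q a b (n + 1) := by
  have hshift := sub_one_mul_f32Term_sub_one ha c q b n
  have hab : (a + n) * (b + n) ≠ 0 :=
    mul_ne_zero (by simpa [add_assoc] using ha.add_natCast_ne_zero (n + 1))
      (hb.add_natCast_ne_zero n)
  have hsucc :
      (a + n) * (b + n) * f32Term c q a b (n + 1) = (c + n) * (q + n) * f32Term c q a b n := by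
    rw [f32Term_succ, mul_div_assoc', mul_div_cancel₀ _ hab, mul_comm]
  push_cast
  linear_combination (a + b - c - q - 2) * hshift + hsucc

lemma sum_range_f32Term_contiguous {a b : ℝ} (ha : NotNonposInt (a - 1)) (hb : NotNonposInt b)
    (c q : ℝ) (N : ℕ) :
    (a - 1) * (a + b - c - q - 2) * ∑ n ∈ Finset.range N, f32Term c q (a - 1) b n
        - (a - q - 1) * (a - c - 1) * ∑ n ∈ Finset.range N, f32Term c q a b n
      = (a - 1) * (b - 1) - (a - 1 + N) * (b - 1 + N) * f32Term c q a b N := by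
  rw [Finset.mul_sum, Finset.mul_sum, ← Finset.sum_sub_distrib,
    Finset.sum_congr rfl fun n _ => f32Term_contiguous ha hb c q n, Finset.sum_range_sub']
  simp [f32Term, poch]

lemma isBigO_rpow_neg_of_eventually_antitone {E : Type*} [SeminormedAddCommGroup E] {u : ℕ → E}
    {p : ℝ} (h : ∀ᶠ n : ℕ in atTop, ‖u (n + 1)‖ * ((n + 1 : ℕ) : ℝ) ^ p ≤ ‖u n‖ * (n : ℝ) ^ p) :
    u =O[atTop] fun n => (n : ℝ) ^ (-p) := by
  obtain ⟨N, hN⟩ := eventually_atTop.1 h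
  have hle : ∀ n ≥ N, ‖u n‖ * (n : ℝ) ^ p ≤ ‖u N‖ * (N : ℝ) ^ p := by
    intro n hn
    induction n, hn using Nat.le_induction with
    | base => rfl
    | succ n hn ih => exact (hN n hn).trans ih
  refine IsBigO.of_bound (‖u N‖ * (N : ℝ) ^ p) ?_
  filter_upwards [eventually_ge_atTop N, eventually_gt_atTop 0] with n hn hpos
  have hnp : 0 < (n : ℝ) ^ p := Real.rpow_pos_of_pos (Nat.cast_pos.2 hpos) p
  rw [Real.norm_of_nonneg (Real.rpow_nonneg n.cast_nonneg _), Real.rpow_neg n.cast_nonneg,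
    ← div_eq_mul_inv, le_div_iff₀ hnp]
  exact hle n hn

lemma one_sub_div_mul_rpow_le {p x : ℝ} (hp : 1 ≤ p) (hx : 0 ≤ x) :
    (1 - p / (x + 1)) * (x + 1) ^ p ≤ x ^ p := by
  have hx₁ : 0 < x + 1 := by linarith
  have hs : -1 ≤ -(1 / (x + 1)) := by
    rw [neg_le_neg_iff, div_le_one hx₁]
    linarith
  have hbern := one_add_mul_self_le_rpow_one_add hs hp
  rw [show 1 + -(1 / (x + 1)) = x / (x + 1) by field_simp; ring, Real.div_rpow hx hx₁.le,
    le_div_iff₀ (Real.rpow_pos_of_pos hx₁ p)] at hbern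
  calc (1 - p / (x + 1)) * (x + 1) ^ p = (1 + p * -(1 / (x + 1))) * (x + 1) ^ p := by ring
    _ ≤ x ^ p := hbern

lemma eventually_pos_quadratic {α : ℝ} (hα : 0 < α) (β γ : ℝ) :
    ∀ᶠ x : ℝ in atTop, 0 < α * x ^ 2 + β * x + γ := by
  filter_upwards [eventually_ge_atTop ((|β| + |γ| + 1) / α + 1)] with x hx
  have hx₁ : 1 ≤ x := by
    have := div_nonneg (by positivity : 0 ≤ |β| + |γ| + 1) hα.le
    linarith
  have hαx : |β| + |γ| + 1 ≤ α * x := by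
    rw [← div_le_iff₀' hα]
    linarith
  nlinarith [mul_le_mul_of_nonneg_right hαx (by linarith : 0 ≤ x),
    mul_le_mul_of_nonneg_right (neg_abs_le β) (by linarith : 0 ≤ x),
    mul_le_mul_of_nonneg_left hx₁ (abs_nonneg γ), neg_abs_le γ]

lemma eventually_f32Term_ratio_le {a b c q p : ℝ} (hp : p < a + b - c - q) :
    ∀ᶠ n : ℕ in atTop, 0 ≤ (c + n) * (q + n) / ((a + n) * (b + n)) ∧
      (c + n) * (q + n) / ((a + n) * (b + n)) ≤ 1 - p / (n + 1) := by
  have hpos (x : ℝ) : ∀ᶠ n : ℕ in atTop, 0 < x + n :=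
    (tendsto_natCast_atTop_atTop.eventually_gt_atTop (-x)).mono fun n hn => by linarith
  -- `(a + n)(b + n)(n + 1 - p) - (c + n)(q + n)(n + 1)`, expanded in powers of `n`
  have hquad := tendsto_natCast_atTop_atTop.eventually <| eventually_pos_quadratic (sub_pos.2 hp)
    (a * b + (a + b) * (1 - p) - c * q - c - q) (a * b * (1 - p) - c * q)
  filter_upwards [hpos a, hpos b, hpos c, hpos q, hquad] with n ha hb hc hq hD
  refine ⟨by positivity, ?_⟩
  rw [div_le_iff₀ (by positivity), one_sub_div (by positivity), div_mul_eq_mul_div,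
    le_div_iff₀ (by positivity)]
  linarith

lemma f32Term_isBigO_rpow_neg {a b c q p : ℝ} (hp₁ : 1 ≤ p) (hp : p < a + b - c - q) :
    f32Term c q a b =O[atTop] fun n => (n : ℝ) ^ (-p) := by
  refine isBigO_rpow_neg_of_eventually_antitone ?_
  filter_upwards [eventually_f32Term_ratio_le hp] with n ⟨hρ₀, hρ⟩
  rw [f32Term_succ, norm_mul, Real.norm_of_nonneg hρ₀, mul_assoc]
  gcongr
  push_cast
  calc _ ≤ (1 - p / (n + 1)) * ((n : ℝ) + 1) ^ p := by gcongr
    _ ≤ (n : ℝ) ^ p := one_sub_div_mul_rpow_le hp₁ n.cast_nonneg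

lemma summable_f32Term {a b c q : ℝ} (h : c + q + 1 < a + b) : Summable (f32Term c q a b) := by
  obtain ⟨p, hp₁, hp⟩ := exists_between (show 1 < a + b - c - q by linarith)
  exact summable_of_isBigO_nat' (Real.summable_nat_rpow.2 (neg_lt_neg hp₁))
    (f32Term_isBigO_rpow_neg hp₁.le hp)

lemma isBigO_add_natCast (x : ℝ) : (fun n : ℕ => x + n) =O[atTop] fun n => (n : ℝ) := by
  refine IsBigO.of_bound (|x| + 1) ?_
  filter_upwards [eventually_ge_atTop 1] with n hn
  have hn₁ : (1 : ℝ) ≤ n := by exact_mod_cast hn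
  rw [Real.norm_of_nonneg n.cast_nonneg, Real.norm_eq_abs]
  calc |x + n| ≤ |x| + n := by simpa using abs_add_le x n
    _ ≤ (|x| + 1) * n := by nlinarith [abs_nonneg x]

lemma tendsto_f32Term_boundary {a b c q : ℝ} (h : c + q + 2 < a + b) :
    Tendsto (fun n : ℕ => (a - 1 + n) * (b - 1 + n) * f32Term c q a b n) atTop (𝓝 0) := by
  obtain ⟨p, hp₂, hp⟩ := exists_between (show 2 < a + b - c - q by linarith)
  have hO := ((isBigO_add_natCast (a - 1)).mul (isBigO_add_natCast (b - 1))).mul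
    (f32Term_isBigO_rpow_neg (by linarith) hp)
  refine hO.trans_tendsto ?_
  have hpow :
      (fun n : ℕ => (n : ℝ) * n * (n : ℝ) ^ (-p)) = fun n : ℕ => (n : ℝ) ^ (-(p - 2)) := by
    funext n
    rw [show -(p - 2) = 2 + -p by ring, Real.rpow_add' n.cast_nonneg (by linarith), Real.rpow_two,
      sq]
  rw [hpow]
  exact (tendsto_rpow_neg_atTop (by linarith)).comp tendsto_natCast_atTop_atTop

theorem stmt4_general (a b c q : ℝ) (ha1 : NotNonposInt (a - 1))
    (hb : NotNonposInt b) (h : a + b > c + q + 2) :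
    (a - 1) * (a + b - c - q - 2) * F32 1 c q (a - 1) b 1
      - (a - q - 1) * (a - c - 1) * F32 1 c q a b 1
      = (a - 1) * (b - 1) := by
  have hS₁ := summable_f32Term (by linarith : c + q + 1 < a - 1 + b)
  have hS₂ := summable_f32Term (by linarith : c + q + 1 < a + b)
  have hpartial := (hS₁.hasSum.tendsto_sum_nat.const_mul ((a - 1) * (a + b - c - q - 2))).sub
    (hS₂.hasSum.tendsto_sum_nat.const_mul ((a - q - 1) * (a - c - 1)))
  simp only [sum_range_f32Term_contiguous ha1 hb] at hpartial
  rw [F32_one_eq_tsum, F32_one_eq_tsum, ← sub_zero ((a - 1) * (b - 1))]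
  exact tendsto_nhds_unique hpartial
    (tendsto_const_nhds.sub (tendsto_f32Term_boundary (by linarith)))

/-- If `a + b > c + q + 2`, then
`(a−1)(a+b−c−q−2)·₃F₂(1,c,q;a−1,b;1) − (a−q−1)(a−c−1)·₃F₂(1,c,q;a,b;1) = (a−1)(b−1)`. -/
theorem stmt4 (a b c q : ℝ) (ha1 : NotNonposInt (a - 1)) (ha : NotNonposInt a)
    (hb : NotNonposInt b) (h : a + b > c + q + 2) :
    (a - 1) * (a + b - c - q - 2) * F32 1 c q (a - 1) b 1
      - (a - q - 1) * (a - c - 1) * F32 1 c q a b 1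
      = (a - 1) * (b - 1) :=
  stmt4_general a b c q ha1 hb h
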